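/- If E' ⊆ 𝓑 × 𝓑 is the arc set of a Hamiltonian (directed) cycle in the body graph D_𝓑, then Φ_{E'} represents h_𝓑 and |Φ_{E'}|_TA ≤ 2 · OPT_TA(𝓑). -/

import Mathlib

open Finset

variable {V : Type*} [Fintype V] [DecidableEq V]

/-- A pure Horn CNF is a finite set of clauses `(B, v)`: body `B`, head `v`,
with `B` nonempty and `v ∉ B`. -/
def PureHorn (Φ : Finset (Finset V × V)) : Prop :=
  ∀ c ∈ Φ, c.1.Nonempty ∧ c.2 ∉ c.1

/-- A set `W` is closed under the clauses of `Φ`. -/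
def HornClosed (Φ : Finset (Finset V × V)) (W : Set V) : Prop :=
  ∀ c ∈ Φ, ↑c.1 ⊆ W → c.2 ∈ W

/-- Forward-chaining closure `F_Φ(Z)`: the smallest set containing `Z`
that is closed under the clauses of `Φ`. -/
def hornClosure (Φ : Finset (Finset V × V)) (Z : Set V) : Set V :=
  ⋂₀ {W : Set V | Z ⊆ W ∧ HornClosed Φ W}

/-- `Ψ_𝓑 = ⋀_{B ∈ 𝓑} B → (V \ B)`. -/
def keyCNF (𝓑 : Finset (Finset V)) : Finset (Finset V × V) :=
  𝓑.biUnion fun B => (Finset.univ \ B).image fun v => (B, v)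

/-- `Φ` represents the key Horn function `h_𝓑`, i.e. `Φ` is a pure Horn CNF
equivalent to `Ψ_𝓑`. -/
def Represents (𝓑 : Finset (Finset V)) (Φ : Finset (Finset V × V)) : Prop :=
  PureHorn Φ ∧ ∀ Z : Finset V, hornClosure Φ ↑Z = hornClosure (keyCNF 𝓑) ↑Z

/-- (B) number of (distinct) bodies. -/
def sizeB (Φ : Finset (Finset V × V)) : ℕ := (Φ.image Prod.fst).card
/-- (BA) body area `Σ_i |B_i|` over the distinct bodies. -/
def sizeBA (Φ : Finset (Finset V × V)) : ℕ := ∑ B ∈ Φ.image Prod.fst, B.card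
/-- (C) number of clauses `Σ_i |H_i|`. -/
def sizeC (Φ : Finset (Finset V × V)) : ℕ := Φ.card
/-- (TA) total area `Σ_i (|B_i| + |H_i|)`. -/
def sizeTA (Φ : Finset (Finset V × V)) : ℕ := sizeBA Φ + sizeC Φ
/-- (BC) bodies plus clauses `Σ_i (|H_i| + 1)`. -/
def sizeBC (Φ : Finset (Finset V × V)) : ℕ := sizeB Φ + sizeC Φ
/-- (L) number of literals `Σ_i (|B_i| + 1)·|H_i|`. -/
def sizeL (Φ : Finset (Finset V × V)) : ℕ := ∑ c ∈ Φ, (c.1.card + 1)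

/-- `μ` is one of the six size measures. -/
def IsMeasure (μ : Finset (Finset V × V) → ℕ) : Prop :=
  μ = sizeB ∨ μ = sizeBA ∨ μ = sizeTA ∨ μ = sizeC ∨ μ = sizeBC ∨ μ = sizeL

/-- `OPT_μ(𝓑)`: minimum `μ`-size of a CNF representing `h_𝓑`. -/
noncomputable def OPT (μ : Finset (Finset V × V) → ℕ) (𝓑 : Finset (Finset V)) : ℕ :=
  sInf {s : ℕ | ∃ Φ : Finset (Finset V × V), Represents 𝓑 Φ ∧ μ Φ = s}

/-- `price_μ(S,T)`: minimum `μ`-size of a pure Horn CNF with bodies in `𝓑`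
whose forward chaining from `S` reaches all of `T`. -/
noncomputable def price (μ : Finset (Finset V × V) → ℕ) (𝓑 : Finset (Finset V))
    (S T : Finset V) : ℕ :=
  sInf {s : ℕ | ∃ Φ : Finset (Finset V × V),
    PureHorn Φ ∧ (∀ c ∈ Φ, c.1 ∈ 𝓑) ∧ ↑T ⊆ hornClosure Φ ↑S ∧ μ Φ = s}

/-!
`Φ_{E'}` is a subset of `Ψ_𝓑`. Conversely, forward chaining from any body `B` follows the cycle
`B → nxt B → nxt² B → ⋯`, which visits every member of `𝓑`, so it reaches `⋃ 𝓑 = V`; hence the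
two CNFs have the same closed sets. Both the body area and the number of clauses of `Φ_{E'}` are
at most `∑_{B ∈ 𝓑} |B|` (the heads of `B` are `nxt B \ B`, and `nxt` permutes `𝓑`), whereas the
Sperner property forces every `B ∈ 𝓑` to be a body of any CNF representing `h_𝓑`, so
`OPT_TA(𝓑) ≥ ∑_{B ∈ 𝓑} |B|`.
-/

section HornClosure

omit [Fintype V] [DecidableEq V]

variable {Φ Ψ : Finset (Finset V × V)} {Z W : Set V}

theorem subset_hornClosure (Φ : Finset (Finset V × V)) (Z : Set V) : Z ⊆ hornClosure Φ Z :=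
  fun _ hv => Set.mem_sInter.2 fun _ hW => hW.1 hv

theorem hornClosure_subset (hZW : Z ⊆ W) (hW : HornClosed Φ W) : hornClosure Φ Z ⊆ W :=
  Set.sInter_subset_of_mem ⟨hZW, hW⟩

theorem hornClosed_hornClosure (Φ : Finset (Finset V × V)) (Z : Set V) :
    HornClosed Φ (hornClosure Φ Z) :=
  fun c hc hsub => Set.mem_sInter.2 fun _ hW =>
    hW.2 c hc (hsub.trans (Set.sInter_subset_of_mem hW))

theorem HornClosed.anti (h : Φ ⊆ Ψ) (hW : HornClosed Ψ W) : HornClosed Φ W :=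
  fun c hc => hW c (h hc)

theorem hornClosure_congr (h : ∀ W, HornClosed Φ W ↔ HornClosed Ψ W) (Z : Set V) :
    hornClosure Φ Z = hornClosure Ψ Z := by
  simp only [hornClosure, h]

theorem head_mem_hornClosure_body {c : Finset V × V} (hc : c ∈ Φ) : c.2 ∈ hornClosure Φ c.1 :=
  hornClosed_hornClosure Φ _ c hc (subset_hornClosure Φ _)

theorem exists_clause_of_mem_hornClosure {v : V} (hv : v ∈ hornClosure Φ Z) (hvZ : v ∉ Z) :
    ∃ c ∈ Φ, ↑c.1 ⊆ Z ∧ c.2 ∉ Z := by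
  by_contra! h
  exact hvZ (hornClosure_subset subset_rfl h hv)

end HornClosure

section SuccCNF

omit [Fintype V]

variable {𝓑 : Finset (Finset V)} {nxt : Finset V → Finset V}

/-- `Φ_{E'}` for the arc set `E' = {(B, nxt B) | B ∈ 𝓑}`. -/
def succCNF (𝓑 : Finset (Finset V)) (nxt : Finset V → Finset V) : Finset (Finset V × V) :=
  𝓑.biUnion fun B => (nxt B \ B).image fun v => (B, v)

theorem mem_succCNF {C : Finset V} {w : V} :
    (C, w) ∈ succCNF 𝓑 nxt ↔ C ∈ 𝓑 ∧ w ∈ nxt C ∧ w ∉ C := by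
  simp [succCNF, and_assoc]

theorem pureHorn_succCNF (hne : ∀ B ∈ 𝓑, B.Nonempty) : PureHorn (succCNF 𝓑 nxt) := by
  rintro ⟨C, w⟩ hc
  obtain ⟨hC, -, hwC⟩ := mem_succCNF.1 hc
  exact ⟨hne C hC, hwC⟩

theorem HornClosed.coe_iterate_subset {W : Set V} (hW : HornClosed (succCNF 𝓑 nxt) W)
    (hmem : ∀ B ∈ 𝓑, nxt B ∈ 𝓑) {B : Finset V} (hB : B ∈ 𝓑) (hBW : ↑B ⊆ W) :
    ∀ j, ↑(nxt^[j] B) ⊆ W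
  | 0 => hBW
  | j + 1 => by
    intro u hu
    have hj : nxt^[j] B ∈ 𝓑 := Set.MapsTo.iterate (fun B hB => hmem B hB) j hB
    rw [Function.iterate_succ_apply'] at hu
    by_cases hu' : u ∈ nxt^[j] B
    · exact hW.coe_iterate_subset hmem hB hBW j hu'
    · exact hW (_, u) (mem_succCNF.2 ⟨hj, hu, hu'⟩) (hW.coe_iterate_subset hmem hB hBW j)

theorem sizeBA_succCNF_le : sizeBA (succCNF 𝓑 nxt) ≤ ∑ B ∈ 𝓑, #B := by
  refine sum_le_sum_of_subset fun C hC => ?_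
  obtain ⟨⟨C, w⟩, hc, rfl⟩ := mem_image.1 hC
  exact (mem_succCNF.1 hc).1

theorem sizeC_succCNF_le (hmem : ∀ B ∈ 𝓑, nxt B ∈ 𝓑)
    (hinj : ∀ B ∈ 𝓑, ∀ B' ∈ 𝓑, nxt B = nxt B' → B = B') :
    sizeC (succCNF 𝓑 nxt) ≤ ∑ B ∈ 𝓑, #B :=
  calc sizeC (succCNF 𝓑 nxt) ≤ ∑ B ∈ 𝓑, #((nxt B \ B).image fun v => (B, v)) :=
        card_biUnion_le
    _ ≤ ∑ B ∈ 𝓑, #(nxt B) := sum_le_sum fun _ _ => card_image_le.trans (card_le_card sdiff_subset)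
    _ = ∑ B ∈ 𝓑, #B :=
      have hinjOn : Set.InjOn nxt 𝓑 := fun B hB B' hB' => hinj B hB B' hB'
      sum_nbij nxt hmem hinjOn (surjOn_of_injOn_of_card_le nxt hmem hinjOn le_rfl) fun _ _ => rfl

end SuccCNF

section KeyCNF

variable {𝓑 : Finset (Finset V)} {nxt : Finset V → Finset V}

theorem mem_keyCNF {C : Finset V} {w : V} : (C, w) ∈ keyCNF 𝓑 ↔ C ∈ 𝓑 ∧ w ∉ C := by
  simp [keyCNF]

-- A clause of `Φ` that leads out of `B` has its body inside `B`; that body is not closed under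
-- `Ψ_𝓑`, so it contains a member of `𝓑`, which is `B` by the Sperner property.
theorem mem_image_fst_of_represents {Φ : Finset (Finset V × V)} (hrep : Represents 𝓑 Φ)
    (hsperner : ∀ B ∈ 𝓑, ∀ B' ∈ 𝓑, B ⊆ B' → B = B') {B : Finset V} (hB : B ∈ 𝓑)
    (hBuniv : B ≠ univ) : B ∈ Φ.image Prod.fst := by
  obtain ⟨v, hvB⟩ : ∃ v, v ∉ B := by simpa [eq_univ_iff_forall] using hBuniv
  have hv : v ∈ hornClosure Φ B := by
    rw [hrep.2 B]
    exact head_mem_hornClosure_body (mem_keyCNF.2 ⟨hB, hvB⟩)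
  obtain ⟨c, hc, hcB, -⟩ := exists_clause_of_mem_hornClosure hv hvB
  have hhead : c.2 ∈ hornClosure (keyCNF 𝓑) c.1 := by
    rw [← hrep.2 c.1]
    exact head_mem_hornClosure_body hc
  obtain ⟨⟨B', w⟩, hc', hB'c, -⟩ := exists_clause_of_mem_hornClosure hhead (hrep.1 c hc).2
  have hB' : B' ∈ 𝓑 := (mem_keyCNF.1 hc').1
  have hcB : c.1 ⊆ B := coe_subset.1 hcB
  have hB'c : B' ⊆ c.1 := coe_subset.1 hB'c
  obtain rfl : B' = B := hsperner B' hB' B hB (hB'c.trans hcB)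
  exact mem_image.2 ⟨c, hc, hcB.antisymm hB'c⟩

theorem sum_card_le_OPT_sizeTA (hproper : ∀ B ∈ 𝓑, B ≠ univ)
    (hsperner : ∀ B ∈ 𝓑, ∀ B' ∈ 𝓑, B ⊆ B' → B = B') (hex : ∃ Φ, Represents 𝓑 Φ) :
    ∑ B ∈ 𝓑, #B ≤ OPT sizeTA 𝓑 := by
  obtain ⟨Φ, hΦ⟩ := hex
  refine le_csInf ⟨_, Φ, hΦ, rfl⟩ ?_
  rintro _ ⟨Φ', hrep, rfl⟩
  calc ∑ B ∈ 𝓑, #B ≤ sizeBA Φ' := sum_le_sum_of_subset fun B hB =>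
        mem_image_fst_of_represents hrep hsperner hB (hproper B hB)
    _ ≤ sizeTA Φ' := Nat.le_add_right _ _

theorem succCNF_subset_keyCNF : succCNF 𝓑 nxt ⊆ keyCNF 𝓑 := by
  rintro ⟨C, w⟩ hc
  obtain ⟨hC, -, hwC⟩ := mem_succCNF.1 hc
  exact mem_keyCNF.2 ⟨hC, hwC⟩

theorem HornClosed.keyCNF_of_succCNF {W : Set V} (hW : HornClosed (succCNF 𝓑 nxt) W)
    (hmem : ∀ B ∈ 𝓑, nxt B ∈ 𝓑) (hham : ∀ B ∈ 𝓑, ∀ B' ∈ 𝓑, ∃ j : ℕ, nxt^[j] B = B')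
    (hcover : ∀ v : V, ∃ B ∈ 𝓑, v ∈ B) : HornClosed (keyCNF 𝓑) W := by
  rintro ⟨C, w⟩ hc hCW
  obtain ⟨B', hB', hwB'⟩ := hcover w
  obtain ⟨j, rfl⟩ := hham C (mem_keyCNF.1 hc).1 B' hB'
  exact hW.coe_iterate_subset hmem (mem_keyCNF.1 hc).1 hCW j hwB'

theorem represents_succCNF (hne : ∀ B ∈ 𝓑, B.Nonempty) (hmem : ∀ B ∈ 𝓑, nxt B ∈ 𝓑)
    (hham : ∀ B ∈ 𝓑, ∀ B' ∈ 𝓑, ∃ j : ℕ, nxt^[j] B = B') (hcover : ∀ v : V, ∃ B ∈ 𝓑, v ∈ B) :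
    Represents 𝓑 (succCNF 𝓑 nxt) :=
  ⟨pureHorn_succCNF hne, fun Z => hornClosure_congr (fun _ =>
    ⟨fun hW => hW.keyCNF_of_succCNF hmem hham hcover, HornClosed.anti succCNF_subset_keyCNF⟩) Z⟩

end KeyCNF

theorem stmt5_general {V : Type*} [Fintype V] [DecidableEq V]
    (𝓑 : Finset (Finset V))
    (hne : ∀ B ∈ 𝓑, B.Nonempty) (hproper : ∀ B ∈ 𝓑, B ≠ Finset.univ)
    (hsperner : ∀ B ∈ 𝓑, ∀ B' ∈ 𝓑, B ⊆ B' → B = B')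
    (hcover : ∀ v : V, ∃ B ∈ 𝓑, v ∈ B)
    (nxt : Finset V → Finset V)
    (hmem : ∀ B ∈ 𝓑, nxt B ∈ 𝓑)
    (hinj : ∀ B ∈ 𝓑, ∀ B' ∈ 𝓑, nxt B = nxt B' → B = B')
    (hham : ∀ B ∈ 𝓑, ∀ B' ∈ 𝓑, ∃ j : ℕ, nxt^[j] B = B')
    (Φ : Finset (Finset V × V))
    (hΦ : Φ = 𝓑.biUnion fun B => (nxt B \ B).image fun v => (B, v)) :
    Represents 𝓑 Φ ∧ sizeTA Φ ≤ 2 * OPT sizeTA 𝓑 := by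
  subst hΦ
  have hrep : Represents 𝓑 (succCNF 𝓑 nxt) := represents_succCNF hne hmem hham hcover
  refine ⟨hrep, ?_⟩
  calc sizeTA (succCNF 𝓑 nxt) = sizeBA (succCNF 𝓑 nxt) + sizeC (succCNF 𝓑 nxt) := rfl
    _ ≤ ∑ B ∈ 𝓑, #B + ∑ B ∈ 𝓑, #B := add_le_add sizeBA_succCNF_le (sizeC_succCNF_le hmem hinj)
    _ = 2 * ∑ B ∈ 𝓑, #B := (two_mul _).symm
    _ ≤ 2 * OPT sizeTA 𝓑 :=
      Nat.mul_le_mul_left 2 (sum_card_le_OPT_sizeTA hproper hsperner ⟨_, hrep⟩)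

/-- If `E'` is the arc set of a Hamiltonian directed cycle in the body graph
(encoded by a successor map `nxt` acting on `𝓑` as a single full cycle), then
`Φ_{E'} = ⋀_{B ∈ 𝓑} B → (nxt B \ B)` represents `h_𝓑` and
`|Φ_{E'}|_TA ≤ 2 · OPT_TA(𝓑)`. -/
theorem stmt5 {V : Type*} [Fintype V] [DecidableEq V]
    (𝓑 : Finset (Finset V))
    (hne : ∀ B ∈ 𝓑, B.Nonempty) (hproper : ∀ B ∈ 𝓑, B ≠ Finset.univ)
    (hsperner : ∀ B ∈ 𝓑, ∀ B' ∈ 𝓑, B ⊆ B' → B = B')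
    (hcover : ∀ v : V, ∃ B ∈ 𝓑, v ∈ B)
    (hinter : ∀ v : V, ∃ B ∈ 𝓑, v ∉ B)
    (nxt : Finset V → Finset V)
    (hmem : ∀ B ∈ 𝓑, nxt B ∈ 𝓑)
    (hinj : ∀ B ∈ 𝓑, ∀ B' ∈ 𝓑, nxt B = nxt B' → B = B')
    (hham : ∀ B ∈ 𝓑, ∀ B' ∈ 𝓑, ∃ j : ℕ, nxt^[j] B = B')
    (Φ : Finset (Finset V × V))
    (hΦ : Φ = 𝓑.biUnion fun B => (nxt B \ B).image fun v => (B, v)) :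
    Represents 𝓑 Φ ∧ sizeTA Φ ≤ 2 * OPT sizeTA 𝓑 :=
  stmt5_general 𝓑 hne hproper hsperner hcover nxt hmem hinj hham Φ hΦ
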